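/- Let u : X_i → ℝ and v : X_j → ℝ be bounded functions and let C > sup |v|. Define two expert outputs g⁺(x_i) = C·u(x_i) and g⁻(x_i) = −C·u(x_i), gated by the two-class softmax of logits α − β(x_j) and α + β(x_j), where β(x_j) = −arctanh(v(x_j)/C). Then the gated output o(x) = r⁺(x)·C·u(x_i) + r⁻(x)·(−C·u(x_i)) equals u(x_i)·v(x_j) for all x. -/

import Mathlib

/-- arctanh t = (1/2)·log((1+t)/(1−t)), as in the paper. -/
noncomputable def arctanh (t : ℝ) : ℝ := (1 / 2) * Real.log ((1 + t) / (1 - t))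

/-- Two-expert product construction: with experts ±C·u(xᵢ) gated by a two-class softmax of
logits α − β(x_j) and α + β(x_j), where β(x_j) = −arctanh(v(x_j)/C), the gated output equals
u(xᵢ)·v(x_j). -/
theorem two_expert_product_construction {Xi Xj : Type*} (u : Xi → ℝ) (v : Xj → ℝ)
    (C : ℝ) (hC : ∀ y, |v y| < C) (α : ℝ)
    (β : Xj → ℝ) (hβ : ∀ y, β y = -arctanh (v y / C))
    (rp rm : Xi × Xj → ℝ)
    (hrp : ∀ x : Xi × Xj, rp x =
      Real.exp (α - β x.2) / (Real.exp (α - β x.2) + Real.exp (α + β x.2)))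
    (hrm : ∀ x : Xi × Xj, rm x =
      Real.exp (α + β x.2) / (Real.exp (α - β x.2) + Real.exp (α + β x.2))) :
    ∀ x : Xi × Xj, rp x * (C * u x.1) + rm x * (-(C * u x.1)) = u x.1 * v x.2 := by
  intro x
  obtain ⟨xi, y⟩ := x
  simp only [hrp, hrm, hβ]
  have hvy := hC y
  have hC0 : 0 < C := lt_of_le_of_lt (abs_nonneg _) hvy
  set t : ℝ := v y / C with ht
  have ht1 : |t| < 1 := by
    rw [ht, abs_div, abs_of_pos hC0, div_lt_one hC0]; exact hvy
  have h1 : 0 < 1 + t := by cases' abs_lt.mp ht1 with h _; linarith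
  have h2 : 0 < 1 - t := by cases' abs_lt.mp ht1 with _ h; linarith
  have hvt : v y = C * t := by rw [ht]; field_simp
  set E := Real.exp (arctanh t) with hEdef
  have hEpos : 0 < E := Real.exp_pos _
  have hE : E ^ 2 = (1 + t) / (1 - t) := by
    rw [hEdef, arctanh, ← Real.exp_nat_mul]
    push_cast
    rw [show (2 : ℝ) * (1 / 2 * Real.log ((1 + t) / (1 - t))) =
        Real.log ((1 + t) / (1 - t)) by ring]
    exact Real.exp_log (div_pos h1 h2)
  have hA : Real.exp (α - -arctanh t) = Real.exp α * E := by
    rw [sub_neg_eq_add, Real.exp_add, hEdef]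
  have hB : Real.exp (α + -arctanh t) = Real.exp α * E⁻¹ := by
    rw [← sub_eq_add_neg, Real.exp_sub, hEdef, div_eq_mul_inv]
  rw [hA, hB, hvt]
  have hα : 0 < Real.exp α := Real.exp_pos _
  have hden : Real.exp α * E + Real.exp α * E⁻¹ ≠ 0 := by positivity
  have hE2 : (1 - t) * E ^ 2 = 1 + t := by
    rw [hE]; field_simp
  field_simp
  linear_combination (u xi) * hE2
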